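/- arXiv:1307.4502 — 2 statements merged into one kernel-verified Lean document; each statement's English description precedes it below -/
import Mathlib

section
/- Let A be an m×n real matrix, x ∈ ℝⁿ, K ⊆ {1,...,n}, and C > 1, and assume that for all w ∈ ker A we have ‖x_K + w_K‖₁ + (1/C)‖w_{K̄}‖₁ ≥ ‖x_K‖₁. Then any ℓ₁ minimizer x̂ subject to Ax̂ = Ax satisfies the total error bound ‖x − x̂‖₁ ≤ ‖(x − x̂)_K‖₁ + (2C/(C−1))‖x_{K̄}‖₁. -/
/-! With `h = x̂ - x ∈ ker A`, the null space property reads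
`‖x_K‖₁ ≤ ‖x̂_K‖₁ + ‖h_K̄‖₁ / C`, and minimality of `x̂` gives `‖x̂‖₁ ≤ ‖x‖₁`. Combining them,
`‖h_K̄‖₁ ≤ ‖x̂_K̄‖₁ + ‖x_K̄‖₁ ≤ ‖x_K‖₁ - ‖x̂_K‖₁ + 2‖x_K̄‖₁ ≤ ‖h_K̄‖₁ / C + 2‖x_K̄‖₁`,
and since `C > 1` this bounds the off-support error by `2C/(C-1) ‖x_K̄‖₁`. -/

noncomputable def l1 {n : ℕ} (x : Fin n → ℝ) : ℝ := ∑ i, |x i|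

def restr {n : ℕ} (x : Fin n → ℝ) (S : Finset (Fin n)) : Fin n → ℝ :=
  fun i => if i ∈ S then x i else 0

section

variable {n : ℕ}

lemma restr_add (a b : Fin n → ℝ) (S : Finset (Fin n)) :
    restr (a + b) S = restr a S + restr b S := by
  ext i
  by_cases hi : i ∈ S <;> simp [restr, hi]

lemma restr_sub (a b : Fin n → ℝ) (S : Finset (Fin n)) :
    restr (a - b) S = restr a S - restr b S := by
  ext i
  by_cases hi : i ∈ S <;> simp [restr, hi]

lemma l1_restr (v : Fin n → ℝ) (S : Finset (Fin n)) :
    l1 (restr v S) = ∑ i ∈ S, |v i| := by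
  simp [l1, restr, apply_ite abs, Finset.sum_ite_mem]

lemma l1_eq_l1_restr_add_l1_restr_compl (v : Fin n → ℝ) (S : Finset (Fin n)) :
    l1 v = l1 (restr v S) + l1 (restr v Sᶜ) := by
  rw [l1_restr, l1_restr, Finset.sum_add_sum_compl, l1]

lemma l1_restr_sub_comm (a b : Fin n → ℝ) (S : Finset (Fin n)) :
    l1 (restr (a - b) S) = l1 (restr (b - a) S) := by
  simp only [l1_restr]
  exact Finset.sum_congr rfl fun i _ => abs_sub_comm (a i) (b i)

lemma l1_sub_le (a b : Fin n → ℝ) : l1 (a - b) ≤ l1 a + l1 b := by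
  rw [l1, l1, l1, ← Finset.sum_add_distrib]
  exact Finset.sum_le_sum fun i _ => abs_sub (a i) (b i)

lemma l1_restr_compl_sub_le {x xhat : Fin n → ℝ} {K : Finset (Fin n)} {C : ℝ} (hC : 1 < C)
    (hmin : l1 xhat ≤ l1 x)
    (hcone : l1 (restr x K) ≤ l1 (restr xhat K) + (1 / C) * l1 (restr (xhat - x) Kᶜ)) :
    l1 (restr (xhat - x) Kᶜ) ≤ 2 * C / (C - 1) * l1 (restr x Kᶜ) := by
  have htail : l1 (restr (xhat - x) Kᶜ) ≤ l1 (restr xhat Kᶜ) + l1 (restr x Kᶜ) := by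
    rw [restr_sub]
    exact l1_sub_le _ _
  rw [l1_eq_l1_restr_add_l1_restr_compl xhat K, l1_eq_l1_restr_add_l1_restr_compl x K] at hmin
  have hself :
      l1 (restr (xhat - x) Kᶜ) ≤ 1 / C * l1 (restr (xhat - x) Kᶜ) + 2 * l1 (restr x Kᶜ) := by
    linarith
  have hC0 : 0 < C := by linarith
  have hscaled := mul_le_mul_of_nonneg_left hself hC0.le
  rw [mul_add, ← mul_assoc, mul_one_div_cancel hC0.ne', one_mul] at hscaled
  rw [div_mul_eq_mul_div, le_div_iff₀ (by linarith)]
  linarith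

end

theorem stmt_7 {m n : ℕ} (A : Matrix (Fin m) (Fin n) ℝ) (x : Fin n → ℝ)
    (K : Finset (Fin n)) (C : ℝ) (hC : 1 < C)
    (hns : ∀ w : Fin n → ℝ, A.mulVec w = 0 →
      l1 (restr x K + restr w K) + (1 / C) * l1 (restr w Kᶜ) ≥ l1 (restr x K))
    (xhat : Fin n → ℝ) (hfeas : A.mulVec xhat = A.mulVec x)
    (hmin : ∀ z : Fin n → ℝ, A.mulVec z = A.mulVec x → l1 xhat ≤ l1 z) :
    l1 (x - xhat) ≤ l1 (restr (x - xhat) K) + (2 * C / (C - 1)) * l1 (restr x Kᶜ) := by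
  have hker : A.mulVec (xhat - x) = 0 := by
    rw [Matrix.mulVec_sub, hfeas, sub_self]
  have hcone := hns _ hker
  rw [← restr_add, add_sub_cancel] at hcone
  have htail := l1_restr_compl_sub_le hC (hmin x rfl) hcone
  rw [l1_eq_l1_restr_add_l1_restr_compl (x - xhat) K, l1_restr_sub_comm x xhat Kᶜ]
  exact add_le_add_right htail _
end

section
/- Let ω > 1, L ⊆ {1,...,n}, and let A be an m×n matrix such that for every nonzero w ∈ ker A: ω‖w_{L̄ ∩ S̄}‖₁ > ‖w_L‖₁ + ω‖w_{L̄ ∩ S}‖₁ for every S ⊆ L̄ with |S| ≤ s. Then every vector x whose support is contained in L ∪ S for some S ⊆ L̄ with |S| ≤ s is the unique minimizer of ‖z_L‖₁ + ω‖z_{L̄}‖₁ subject to Az = Ax. -/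
/-! Put `w := z - x`, a nonzero element of `ker A`. Since `x` vanishes on `L̄ ∩ S̄`, the triangle
inequality on `L`, `L̄ ∩ S` and `L̄ ∩ S̄` gives
`‖z_L‖₁ + ω‖z_L̄‖₁ ≥ ‖x_L‖₁ + ω‖x_L̄‖₁ + (ω‖w_{L̄∩S̄}‖₁ - ‖w_L‖₁ - ω‖w_{L̄∩S}‖₁)`,
and the null space property says exactly that the bracket is positive. -/

section

variable {n : ℕ}

theorem l1_restr_eq_sum (v : Fin n → ℝ) (T : Finset (Fin n)) :
    l1 (restr v T) = ∑ i ∈ T, |v i| := by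
  simp only [l1, restr, apply_ite abs, abs_zero, Finset.sum_ite_mem, Finset.univ_inter]

theorem l1_restr_eq_inter_add_inter_compl (v : Fin n → ℝ) (T S : Finset (Fin n)) :
    l1 (restr v T) = l1 (restr v (T ∩ S)) + l1 (restr v (T ∩ Sᶜ)) := by
  simp only [l1_restr_eq_sum, ← Finset.sdiff_eq_inter_compl, Finset.sum_inter_add_sum_sdiff]

theorem l1_restr_sub_le (a b : Fin n → ℝ) (T : Finset (Fin n)) :
    l1 (restr (a - b) T) ≤ l1 (restr a T) + l1 (restr b T) := by
  simp only [l1_restr_eq_sum, ← Finset.sum_add_distrib]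
  exact Finset.sum_le_sum fun i _ => abs_sub (a i) (b i)

theorem l1_restr_eq_zero {v : Fin n → ℝ} {T : Finset (Fin n)} (hv : ∀ i ∈ T, v i = 0) :
    l1 (restr v T) = 0 := by
  rw [l1_restr_eq_sum]
  exact Finset.sum_eq_zero fun i hi => by rw [hv i hi, abs_zero]

end

theorem stmt_13 {m n : ℕ} (A : Matrix (Fin m) (Fin n) ℝ) (L : Finset (Fin n))
    (ω : ℝ) (hω : 1 < ω) (s : ℕ)
    (hns : ∀ w : Fin n → ℝ, A.mulVec w = 0 → w ≠ 0 →
      ∀ S : Finset (Fin n), S ⊆ Lᶜ → S.card ≤ s →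
        ω * l1 (restr w (Lᶜ ∩ Sᶜ)) > l1 (restr w L) + ω * l1 (restr w (Lᶜ ∩ S))) :
    ∀ (x : Fin n → ℝ) (S : Finset (Fin n)), S ⊆ Lᶜ → S.card ≤ s →
      (∀ i, x i ≠ 0 → i ∈ L ∪ S) →
      ∀ z : Fin n → ℝ, A.mulVec z = A.mulVec x → z ≠ x →
        l1 (restr x L) + ω * l1 (restr x Lᶜ) <
          l1 (restr z L) + ω * l1 (restr z Lᶜ) := by
  intro x S hS hcard hsupp z hAz hne
  have hnsp := hns (z - x) (by rw [Matrix.mulVec_sub, hAz, sub_self]) (sub_ne_zero.mpr hne)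
    S hS hcard
  have hx_off : l1 (restr x (Lᶜ ∩ Sᶜ)) = 0 := l1_restr_eq_zero fun i hi => by
    by_contra hxi
    simp only [Finset.mem_inter, Finset.mem_compl] at hi
    rcases Finset.mem_union.mp (hsupp i hxi) with h | h
    exacts [hi.1 h, hi.2 h]
  have tri_L := l1_restr_sub_le z (z - x) L
  have tri_S := l1_restr_sub_le z (z - x) (Lᶜ ∩ S)
  have tri_off := l1_restr_sub_le z x (Lᶜ ∩ Sᶜ)
  rw [sub_sub_cancel] at tri_L tri_S
  rw [hx_off, add_zero] at tri_off
  rw [l1_restr_eq_inter_add_inter_compl x Lᶜ S, l1_restr_eq_inter_add_inter_compl z Lᶜ S,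
    hx_off, add_zero]
  have hω0 : 0 ≤ ω := by linarith
  linarith [mul_le_mul_of_nonneg_left tri_S hω0, mul_le_mul_of_nonneg_left tri_off hω0]
end
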